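/- arXiv:1812.05004 — 3 statements merged into one kernel-verified Lean document; each statement's English description precedes it below -/
import Mathlib

section
/- Let G be a group, (φ_t) a one-parameter group of automorphisms, and (A_t)_{t>0} subsets with A_{t1+t2} = A_{t1}·φ_{t1}(A_{t2}); set A = ⋃_{t>0} A_t and for x ∈ G set A(x) = ⋃_{t>0} A_t·{φ_t(x)}. If the orbit O(x,φ) = {φ_t(x) : t ∈ ℝ} is contained in A(x), then A·x ⊆ A(x). -/
open Pointwise

/-- If the `φ`-orbit of `x` is contained in the reachable set from `x`,
`A(x) = ⋃_{t>0} A_t · {φ_t(x)}`, then `A · x ⊆ A(x)`. -/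
theorem stmt_2 {G : Type*} [Group G] (φ : ℝ → G ≃* G)
    (hφ : ∀ s t : ℝ, φ (s + t) = (φ t).trans (φ s))
    (A : ℝ → Set G)
    (hA : ∀ t₁ t₂ : ℝ, 0 < t₁ → 0 < t₂ → A (t₁ + t₂) = A t₁ * (φ t₁) '' A t₂)
    (x : G)
    (horb : ∀ t : ℝ, φ t x ∈ ⋃ s > (0 : ℝ), A s * ({φ s x} : Set G)) :
    (⋃ t > (0 : ℝ), A t) * ({x} : Set G) ⊆ ⋃ s > (0 : ℝ), A s * ({φ s x} : Set G) := by
  -- φ inverts: φ t (φ (-t) x) = x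
  have hinv : ∀ t : ℝ, ∀ g : G, φ t (φ (-t) g) = φ 0 g := by
    intro t g
    have := hφ t (-t)
    rw [add_neg_cancel] at this
    rw [this]; rfl
  have h0 : ∀ g : G, φ 0 g = g := by
    intro g
    have h := hφ 0 0
    rw [add_zero] at h
    have hg : ((φ 0).trans (φ 0)) g = φ 0 g := by rw [← h]
    exact (φ 0).injective hg
  rintro y hy
  simp only [Set.mul_singleton, Set.mem_image, Set.mem_iUnion] at hy
  obtain ⟨a, ⟨t, ht, hat⟩, rfl⟩ := hy
  have horbt := horb (-t)
  simp only [Set.mem_iUnion, Set.mem_mul, Set.mem_singleton_iff] at horbt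
  obtain ⟨s, hs, b, hb, w, hw, hbw⟩ := horbt
  subst hw
  -- φ (-t) x = b * φ s x, so x = φ t b * φ (t+s) x
  have hx : x = φ t b * φ (t + s) x := by
    conv_lhs => rw [← h0 x, ← hinv t x, ← hbw]
    rw [map_mul, hφ t s]; rfl
  simp only [Set.mem_iUnion]
  refine ⟨t + s, by linarith, ?_⟩
  rw [Set.mem_mul]
  refine ⟨a * φ t b, ?_, φ (t + s) x, rfl, ?_⟩
  · rw [hA t s ht hs]
    exact Set.mul_mem_mul hat ⟨b, hb, rfl⟩
  · rw [mul_assoc]; congr 1; exact hx.symm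
end

section
/- Let G be a group, φ : ℝ → Aut(G) a one-parameter group of automorphisms, (A_t)_{t>0} subsets with A_{t1+t2} = A_{t1}·φ_{t1}(A_{t2}), Z ≤ G a φ-invariant subgroup, Z_0 ⊴ Z φ-invariant with Z_0 ⊆ A := ⋃_{t>0}A_t, and x, y in the same coset of Z_0 in Z (i.e., yx⁻¹ ∈ Z_0). Define A(g) := ⋃_{t>0} A_t·{φ_t(g)}. Assume the orbit condition: for all z ∈ Z_0, {φ_t(z) : t ∈ ℝ} ⊆ A (so A·z ⊆ A by the point-invariance lemma), and assume O(x,φ) ⊆ A(x) and O(y,φ) ⊆ A(y) so that A(x) = A·x and A(y) = A·y. Then A(x) = A(y). -/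
open Pointwise

section Aux

variable {G : Type*} [Group G] (φ : ℝ → G ≃* G)

lemma phi_zero (hφ : ∀ s t : ℝ, φ (s + t) = (φ t).trans (φ s)) (g : G) : φ 0 g = g := by
  have h := hφ 0 0
  have : φ 0 (φ 0 g) = φ 0 g := by
    conv_rhs => rw [show (0:ℝ) = 0 + 0 by ring, h]
    rfl
  exact (φ 0).injective this

lemma phi_inv (hφ : ∀ s t : ℝ, φ (s + t) = (φ t).trans (φ s)) (t : ℝ) (g : G) :
    φ t (φ (-t) g) = g := by
  have h := hφ t (-t)
  have : φ (t + -t) g = φ t (φ (-t) g) := by rw [h]; rfl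
  rw [show t + -t = (0:ℝ) by ring, phi_zero φ hφ] at this
  exact this.symm

/-- point invariance: A · z ⊆ A for z with all orbit points in A. -/
lemma memA_mul (hφ : ∀ s t : ℝ, φ (s + t) = (φ t).trans (φ s))
    (A : ℝ → Set G)
    (hA : ∀ t₁ t₂ : ℝ, 0 < t₁ → 0 < t₂ → A (t₁ + t₂) = A t₁ * (φ t₁) '' A t₂)
    {a z : G} (horb : ∀ t : ℝ, φ t z ∈ ⋃ s > (0 : ℝ), A s)
    {t₁ : ℝ} (ht₁ : 0 < t₁) (ha : a ∈ A t₁) :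
    ∃ t > (0:ℝ), a * z ∈ A t := by
  obtain ⟨S, ⟨t₂, rfl⟩, hS⟩ := horb (-t₁)
  simp only [Set.mem_iUnion, exists_prop] at hS
  obtain ⟨ht₂, hmem⟩ := hS
  refine ⟨t₁ + t₂, by linarith, ?_⟩
  rw [hA t₁ t₂ ht₁ ht₂]
  have : a * z = a * φ t₁ (φ (-t₁) z) := by rw [phi_inv φ hφ]
  rw [this]
  exact Set.mul_mem_mul ha ⟨_, hmem, rfl⟩

/-- one inclusion of the main theorem -/
lemma aux_incl (hφ : ∀ s t : ℝ, φ (s + t) = (φ t).trans (φ s))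
    (A : ℝ → Set G)
    (hA : ∀ t₁ t₂ : ℝ, 0 < t₁ → 0 < t₂ → A (t₁ + t₂) = A t₁ * (φ t₁) '' A t₂)
    (Z₀ : Subgroup G)
    (horbZ₀ : ∀ l ∈ Z₀, ∀ t : ℝ, φ t l ∈ ⋃ s > (0 : ℝ), A s)
    (x y : G)
    (hcox : ∀ t : ℝ, φ t x * x⁻¹ ∈ Z₀)
    (hxy : y * x⁻¹ ∈ Z₀)
    (horby : ∀ t : ℝ, φ t y ∈ ⋃ s > (0 : ℝ), A s * ({φ s y} : Set G)) :
    (⋃ s > (0 : ℝ), A s * ({φ s x} : Set G)) ⊆ ⋃ s > (0 : ℝ), A s * ({φ s y} : Set G) := by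
  intro w hw
  simp only [Set.mem_iUnion, exists_prop] at hw ⊢
  obtain ⟨s, hs, hw⟩ := hw
  obtain ⟨a, ha, g, hg, rfl⟩ := hw
  rw [Set.mem_singleton_iff] at hg
  subst hg
  -- step 1: a * φ s x = (a * (φ s x * x⁻¹)) * x ∈ A · x
  obtain ⟨t, ht, hb⟩ := memA_mul φ hφ A hA (horbZ₀ _ (hcox s)) hs ha
  set b := a * (φ s x * x⁻¹) with hbdef
  have h1 : a * φ s x = b * x := by simp only [hbdef]; group
  -- step 2: b * x = (b * (x * y⁻¹)) * y, with x * y⁻¹ = (y * x⁻¹)⁻¹ ∈ Z₀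
  have hz : x * y⁻¹ ∈ Z₀ := by
    have := Z₀.inv_mem hxy; simpa using this
  obtain ⟨t', ht', hc⟩ := memA_mul φ hφ A hA (horbZ₀ _ hz) ht hb
  set c := b * (x * y⁻¹) with hcdef
  have h2 : b * x = c * y := by simp only [hcdef]; group
  -- step 3: c * y ∈ A(y)
  obtain ⟨S, ⟨s', rfl⟩, hS⟩ := horby (-t')
  simp only [Set.mem_iUnion, exists_prop] at hS
  obtain ⟨hs', d, hd, g', hg', hde⟩ := hS
  rw [Set.mem_singleton_iff] at hg'
  subst hg'
  simp only at hde
  -- d * φ s' y = φ (-t') y, so y = φ t' d * φ (t'+s') y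
  have hy' : y = φ t' d * φ (t' + s') y := by
    have h3 := congrArg (φ t') hde
    rw [phi_inv φ hφ, map_mul] at h3
    have hts : φ (t' + s') y = φ t' (φ s' y) := by rw [hφ t' s']; rfl
    rw [hts, h3]
  refine ⟨t' + s', by linarith, ?_⟩
  have : a * φ s x = (c * φ t' d) * φ (t' + s') y := by
    rw [h1, h2]; conv_lhs => rw [hy']
    group
  show a * φ s x ∈ _
  rw [this]
  refine Set.mul_mem_mul ?_ rfl
  rw [hA t' s' ht' hs']
  exact Set.mul_mem_mul hc ⟨_, hd, rfl⟩

end Aux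

/-- If `x, y` lie in the same coset of the `φ`-invariant normal subgroup `Z₀ ⊆ A` of the
`φ`-invariant subgroup `Z`, and the orbits `O(x,φ) ⊆ A(x)`, `O(y,φ) ⊆ A(y)` (so that
`A(x) = A·x` and `A(y) = A·y`), then the reachable sets coincide: `A(x) = A(y)`. -/
theorem stmt_17 {G : Type*} [Group G] (φ : ℝ → G ≃* G)
    (hφ : ∀ s t : ℝ, φ (s + t) = (φ t).trans (φ s))
    (A : ℝ → Set G)
    (hA : ∀ t₁ t₂ : ℝ, 0 < t₁ → 0 < t₂ → A (t₁ + t₂) = A t₁ * (φ t₁) '' A t₂)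
    (Z Z₀ : Subgroup G) (hle : Z₀ ≤ Z)
    (hnorm : ∀ z ∈ Z, ∀ n ∈ Z₀, z * n * z⁻¹ ∈ Z₀)
    (hZinv : ∀ t : ℝ, ∀ z ∈ Z, φ t z ∈ Z)
    (hZ₀inv : ∀ t : ℝ, ∀ l ∈ Z₀, φ t l ∈ Z₀)
    (hZ₀A : (Z₀ : Set G) ⊆ ⋃ t > (0 : ℝ), A t)
    (horbZ₀ : ∀ l ∈ Z₀, ∀ t : ℝ, φ t l ∈ ⋃ s > (0 : ℝ), A s)
    (hcoset : ∀ t : ℝ, ∀ z ∈ Z, φ t z * z⁻¹ ∈ Z₀)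
    (x y : G) (hx : x ∈ Z) (hy : y ∈ Z) (hxy : y * x⁻¹ ∈ Z₀)
    (horbx : ∀ t : ℝ, φ t x ∈ ⋃ s > (0 : ℝ), A s * ({φ s x} : Set G))
    (horby : ∀ t : ℝ, φ t y ∈ ⋃ s > (0 : ℝ), A s * ({φ s y} : Set G)) :
    (⋃ s > (0 : ℝ), A s * ({φ s x} : Set G)) = ⋃ s > (0 : ℝ), A s * ({φ s y} : Set G) := by
  have hyx : x * y⁻¹ ∈ Z₀ := by
    have := Z₀.inv_mem hxy; simpa using this
  exact le_antisymm
    (aux_incl φ hφ A hA Z₀ horbZ₀ x y (fun t => hcoset t x hx) hxy horby)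
    (aux_incl φ hφ A hA Z₀ horbZ₀ y x (fun t => hcoset t y hy) hyx horbx)
end

section
/- Let M, N be topological spaces, π : M → N a continuous open surjection, and Φ, Ψ control flows on M and N respectively with π ∘ Φ_{t,u} = Ψ_{t,u} ∘ π (the flow on N is induced). Let C ⊆ M be a set on which approximate controllability holds: C ⊆ cl(A_M(x)) for all x ∈ C, where A_M(x) is the reachable set in M. Then π(C) ⊆ cl(A_N(π(x))) for all x ∈ C; in particular π(C) satisfies approximate controllability for the induced system and hence is contained in a control set of the induced system, and if C has nonempty interior so does π(C). -/
/-- The positive-time reachable set `A(x)` of the control flow `Φ`. -/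
def reachableSet {X U : Type*} (Φ : ℝ → U → X → X) (x : X) : Set X :=
  {y | ∃ t > (0 : ℝ), ∃ u : U, Φ t u x = y}

theorem image_reachableSet {M N U : Type*} {π : M → N} {Φ : ℝ → U → M → M}
    {Ψ : ℝ → U → N → N} (hcomm : ∀ t u x, π (Φ t u x) = Ψ t u (π x)) (x : M) :
    π '' reachableSet Φ x = reachableSet Ψ (π x) := by
  ext z
  constructor
  · rintro ⟨_, ⟨t, ht, u, rfl⟩, rfl⟩
    exact ⟨t, ht, u, (hcomm t u x).symm⟩
  · rintro ⟨t, ht, u, rfl⟩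
    exact ⟨Φ t u x, ⟨t, ht, u, rfl⟩, hcomm t u x⟩

theorem image_subset_closure_reachableSet {M N U : Type*} [TopologicalSpace M]
    [TopologicalSpace N] {π : M → N} (hπc : Continuous π) {Φ : ℝ → U → M → M}
    {Ψ : ℝ → U → N → N} (hcomm : ∀ t u x, π (Φ t u x) = Ψ t u (π x)) {C : Set M}
    (hC : ∀ x ∈ C, C ⊆ closure (reachableSet Φ x)) :
    ∀ y ∈ π '' C, π '' C ⊆ closure (reachableSet Ψ y) := by
  rintro _ ⟨x, hx, rfl⟩
  calc π '' C ⊆ π '' closure (reachableSet Φ x) := Set.image_mono (hC x hx)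
    _ ⊆ closure (π '' reachableSet Φ x) := image_closure_subset_closure_image hπc
    _ = closure (reachableSet Ψ (π x)) := by rw [image_reachableSet hcomm]

theorem stmt_19_general {M N U : Type*} [TopologicalSpace M] [TopologicalSpace N]
    (π : M → N) (hπc : Continuous π) (hπo : IsOpenMap π)
    (Φ : ℝ → U → M → M) (Ψ : ℝ → U → N → N)
    (hcomm : ∀ t : ℝ, ∀ u : U, ∀ x : M, π (Φ t u x) = Ψ t u (π x))
    (C : Set M)
    (hC : ∀ x ∈ C, C ⊆ closure {y | ∃ t > (0 : ℝ), ∃ u : U, Φ t u x = y}) :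
    (∀ y ∈ π '' C, π '' C ⊆ closure {z | ∃ t > (0 : ℝ), ∃ u : U, Ψ t u y = z}) ∧
    ((interior C).Nonempty → (interior (π '' C)).Nonempty) :=
  ⟨image_subset_closure_reachableSet hπc hcomm hC,
    fun hint => (hint.image π).mono (hπo.image_interior_subset C)⟩

/-- If `π : M → N` is a continuous open surjection intertwining control flows `Φ` and
`Ψ`, and approximate controllability holds on `C ⊆ M`, then it holds on `π(C)` for the
induced system; moreover `π(C)` has nonempty interior if `C` does. -/
theorem stmt_19 {M N U : Type*} [TopologicalSpace M] [TopologicalSpace N]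
    (π : M → N) (hπc : Continuous π) (hπo : IsOpenMap π) (hπs : Function.Surjective π)
    (Φ : ℝ → U → M → M) (Ψ : ℝ → U → N → N)
    (hcomm : ∀ t : ℝ, ∀ u : U, ∀ x : M, π (Φ t u x) = Ψ t u (π x))
    (C : Set M)
    (hC : ∀ x ∈ C, C ⊆ closure {y | ∃ t > (0 : ℝ), ∃ u : U, Φ t u x = y}) :
    (∀ y ∈ π '' C, π '' C ⊆ closure {z | ∃ t > (0 : ℝ), ∃ u : U, Ψ t u y = z}) ∧
    ((interior C).Nonempty → (interior (π '' C)).Nonempty) :=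
  stmt_19_general π hπc hπo Φ Ψ hcomm C hC
end
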